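/- (Kakeya, part (b)) Let (x_n)_{n=1}^∞ be a sequence of strictly positive real numbers such that ∑_n x_n converges and such that ∑_{k=n+1}^∞ x_k < x_n holds for every sufficiently large n ∈ ℕ. Then the achievement set { ∑_{n=1}^∞ ε_n x_n : ε_n ∈ {0,1} for every n } is a closed subset of ℝ with empty interior. -/

import Mathlib

/-!
The achievement set `A x` is the continuous image of the Cantor space `ℕ → Bool`, hence compact.
Splitting off the first term, `A x = A x' ∪ (x 0 + A x')` with `x'` the tail; both pieces are
closed, so `A x` has empty interior as soon as `A x'` has, and finitely many terms may be dropped.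
Once the Kakeya condition holds everywhere, `A x' ⊆ [0, r]` with `r = ∑ x' < x 0` keeps the two
pieces apart, so a ball of radius `δ` in `A x` yields, by connectedness, one in `A x'`. Iterating,
a ball of radius `δ` lies in the achievement set of every tail `∑_{k ≥ n} x k`, which is contained
in `[0, ∑_{k ≥ n} x k]`; these lengths tend to `0`.
-/

open Filter Set Metric

def achievementSet (x : ℕ → ℝ) : Set ℝ := {y | ∃ T : Set ℕ, HasSum (T.indicator x) y}

theorem isClosed_achievementSet {x : ℕ → ℝ} (hx : Summable x) : IsClosed (achievementSet x) := by
  let subsum : (ℕ → Bool) → ℝ := fun ε => ∑' n, {n | ε n}.indicator x n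
  have hrange : achievementSet x = range subsum := by
    ext y
    constructor
    · rintro ⟨T, hT⟩
      classical
      exact ⟨fun n => decide (n ∈ T), by simpa [subsum] using hT.tsum_eq⟩
    · rintro ⟨ε, rfl⟩
      exact ⟨_, (hx.indicator _).hasSum⟩
  have hcont : Continuous subsum := by
    refine continuous_tsum (fun n => ?_) hx.abs fun n ε => norm_indicator_le_norm_self x n
    refine ((continuous_of_discreteTopology (f := fun b : Bool => if b then x n else 0)).comp
      (continuous_apply n)).congr fun ε => ?_
    by_cases h : ε n <;> simp [h]
  rw [hrange]
  exact (isCompact_range hcont).isClosed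

theorem achievementSet_subset_Icc {x : ℕ → ℝ} (hx0 : ∀ n, 0 ≤ x n) (hx : Summable x) :
    achievementSet x ⊆ Icc 0 (∑' n, x n) := by
  rintro y ⟨T, hT⟩
  exact ⟨hT.nonneg (indicator_nonneg fun n _ => hx0 n),
    hasSum_le (indicator_le_self' fun n _ => hx0 n) hT hx.hasSum⟩

theorem hasSum_indicator_iff_tail {x : ℕ → ℝ} {T : Set ℕ} {y : ℝ} :
    HasSum (T.indicator x) y ↔
      HasSum (((· + 1) ⁻¹' T).indicator fun n => x (n + 1)) (y - T.indicator x 0) := by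
  rw [← hasSum_nat_add_iff' 1]
  simp only [Finset.range_one, Finset.sum_singleton]
  exact Iff.rfl

theorem achievementSet_eq_union_preimage (x : ℕ → ℝ) :
    achievementSet x = achievementSet (fun n => x (n + 1)) ∪
      (· - x 0) ⁻¹' achievementSet (fun n => x (n + 1)) := by
  ext y
  constructor
  · rintro ⟨T, hT⟩
    rw [hasSum_indicator_iff_tail] at hT
    by_cases h0 : 0 ∈ T
    · exact Or.inr ⟨_, by simpa [h0] using hT⟩
    · exact Or.inl ⟨_, by simpa [h0] using hT⟩
  · rintro (⟨S, hS⟩ | ⟨S, hS⟩)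
    · refine ⟨(· + 1) '' S, hasSum_indicator_iff_tail.2 ?_⟩
      simpa [preimage_image_eq S (add_left_injective 1)] using hS
    · have hpre : (· + 1) ⁻¹' insert 0 ((· + 1) '' S) = S := by ext n; simp
      refine ⟨insert 0 ((· + 1) '' S), hasSum_indicator_iff_tail.2 ?_⟩
      simpa [hpre] using hS

theorem interior_achievementSet_eq_empty_of_tail {x : ℕ → ℝ} (hx : Summable x)
    (h : interior (achievementSet fun n => x (n + 1)) = ∅) : interior (achievementSet x) = ∅ := by
  have htranslate : interior ((· - x 0) ⁻¹' achievementSet fun n => x (n + 1)) = ∅ := by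
    rw [← Homeomorph.coe_subRight, ← Homeomorph.preimage_interior, h, preimage_empty]
  rw [achievementSet_eq_union_preimage, interior_union_isClosed_of_interior_empty
    (isClosed_achievementSet ((summable_nat_add_iff 1).2 hx)) htranslate, h]

theorem interior_achievementSet_eq_empty_of_shift {x : ℕ → ℝ} (hx : Summable x) (N : ℕ)
    (h : interior (achievementSet fun n => x (n + N)) = ∅) : interior (achievementSet x) = ∅ := by
  induction N generalizing x with
  | zero => exact h
  | succ N ih =>
    exact interior_achievementSet_eq_empty_of_tail hx (ih ((summable_nat_add_iff 1).2 hx) h)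

theorem exists_ball_subset_achievementSet_tail {x : ℕ → ℝ} (hx0 : ∀ n, 0 ≤ x n)
    (hx : Summable x) (hgap : ∑' n, x (n + 1) < x 0) {c δ : ℝ}
    (h : ball c δ ⊆ achievementSet x) :
    ∃ c', ball c' δ ⊆ achievementSet fun n => x (n + 1) := by
  set A := achievementSet fun n => x (n + 1)
  have hA : A ⊆ Icc 0 (∑' n, x (n + 1)) :=
    achievementSet_subset_Icc (fun n => hx0 _) ((summable_nat_add_iff 1).2 hx)
  obtain ⟨m, hrm, hmx⟩ := exists_between hgap
  have hAm : ∀ z ∈ A, z < m := fun z hz => by linarith [(hA hz).2]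
  have htranslate : ∀ z ∈ (· - x 0) ⁻¹' A, m < z := fun z hz => by linarith [(hA hz).1]
  rw [achievementSet_eq_union_preimage] at h
  rcases (convex_ball c δ).isPreconnected.subset_or_subset isOpen_Iio isOpen_Ioi
      (Iio_disjoint_Ioi_same (a := m)) (h.trans (union_subset_union hAm htranslate)) with hlow | hhigh
  · exact ⟨c, fun z hz => (h hz).resolve_right fun hz' => (htranslate z hz').not_gt (hlow hz)⟩
  · refine ⟨c - x 0, fun z hz => ?_⟩
    have hz' : z + x 0 ∈ ball c δ := by
      rw [mem_ball, Real.dist_eq] at hz ⊢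
      convert hz using 2
      ring
    simpa using (h hz').resolve_left fun hz'' => (hAm _ hz'').not_gt (hhigh hz')

theorem interior_achievementSet_eq_empty_of_forall {x : ℕ → ℝ} (hx0 : ∀ n, 0 ≤ x n)
    (hx : Summable x) (hcond : ∀ n, ∑' k, x (n + 1 + k) < x n) :
    interior (achievementSet x) = ∅ := by
  by_contra hne
  obtain ⟨y, hy⟩ := nonempty_iff_ne_empty.2 hne
  obtain ⟨δ, hδ, hball⟩ := Metric.isOpen_iff.1 isOpen_interior y hy
  have hshift : ∀ k, ∃ c, ball c δ ⊆ achievementSet fun n => x (n + k) := by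
    intro k
    induction k with
    | zero => exact ⟨y, hball.trans interior_subset⟩
    | succ k ih =>
      obtain ⟨c, hc⟩ := ih
      have hgap : ∑' n, x (n + 1 + k) < x (0 + k) := by
        simpa [add_comm, add_left_comm] using hcond k
      simpa only [add_right_comm _ 1 k, add_assoc] using
        exists_ball_subset_achievementSet_tail (fun n => hx0 _)
          ((summable_nat_add_iff k).2 hx) hgap hc
  obtain ⟨k, hk⟩ := ((tendsto_sum_nat_add x).eventually (gt_mem_nhds hδ)).exists
  obtain ⟨c, hc⟩ := hshift k
  have hsub := hc.trans
    (achievementSet_subset_Icc (fun n => hx0 _) ((summable_nat_add_iff k).2 hx))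
  have hIcc : Icc (c - δ / 2) (c + δ / 2) ⊆ Icc 0 (∑' n, x (n + k)) := by
    rw [← Real.closedBall_eq_Icc]
    exact (closedBall_subset_ball (half_lt_self hδ)).trans hsub
  obtain ⟨hc0, hcR⟩ := (Icc_subset_Icc_iff (by linarith)).1 hIcc
  linarith

theorem interior_achievementSet_eq_empty {x : ℕ → ℝ} (hx0 : ∀ n, 0 ≤ x n) (hx : Summable x)
    (hcond : ∀ᶠ n in atTop, ∑' k, x (n + 1 + k) < x n) :
    interior (achievementSet x) = ∅ := by
  obtain ⟨N, hN⟩ := eventually_atTop.1 hcond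
  refine interior_achievementSet_eq_empty_of_shift hx N <|
    interior_achievementSet_eq_empty_of_forall (fun n => hx0 _) ((summable_nat_add_iff N).2 hx)
      fun n => ?_
  convert hN (n + N) le_add_self using 4 with k
  omega

/-- Kakeya, part (b): if `x n` is positive, `∑ x n` converges, and eventually each term is
strictly greater than the sum of all subsequent terms, then the achievement set is a closed
set with empty interior. -/
theorem stmt6 (x : ℕ → ℝ) (hpos : ∀ n, 0 < x n) (hsum : Summable x)
    (hcond : ∀ᶠ n in atTop, (∑' k : ℕ, x (n + 1 + k)) < x n) :
    IsClosed {y : ℝ | ∃ T : Set ℕ, HasSum (Set.indicator T x) y} ∧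
      interior {y : ℝ | ∃ T : Set ℕ, HasSum (Set.indicator T x) y} = ∅ :=
  ⟨isClosed_achievementSet hsum,
    interior_achievementSet_eq_empty (fun n => (hpos n).le) hsum hcond⟩
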